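/- arXiv:2411.02172 — 4 statements merged into one kernel-verified Lean document; each statement's English description precedes it below -/
import Mathlib

section
/- For every n ≥ 1, there exists a sequence of permutations of {1,...,n} starting with the identity permutation (1,2,...,n) and ending with the permutation (n,1,2,...,n−1), in which consecutive permutations differ by a single adjacent transposition, and such that for every nonempty proper subset S of {1,...,n}, the set of indices i for which the first |S| entries of the i-th permutation form the set S is nonempty and forms a contiguous interval. -/
/-- Two permutations of `Fin n` differ by a single adjacent transposition. -/
def AdjSwap (n : ℕ) (π σ : Equiv.Perm (Fin n)) : Prop :=
  ∃ (k : ℕ) (hk : k + 1 < n),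
    σ = π * Equiv.swap (⟨k, Nat.lt_of_succ_lt hk⟩ : Fin n) ⟨k + 1, hk⟩

/-- The prefix-set of size `k` of a permutation `π`. -/
def prefixSet {n : ℕ} (π : Equiv.Perm (Fin n)) (k : ℕ) : Finset (Fin n) :=
  (Finset.univ.filter fun i : Fin n => (i : ℕ) < k).image π

section Helpers

open Equiv Fin Finset

/-- extend a permutation of `Fin n` to `Fin (n+1)` fixing the last element -/
def extPerm {n : ℕ} (σ : Equiv.Perm (Fin n)) : Equiv.Perm (Fin (n + 1)) where
  toFun := fun p => Fin.lastCases (Fin.last n) (fun i => (σ i).castSucc) p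
  invFun := fun p => Fin.lastCases (Fin.last n) (fun i => (σ.symm i).castSucc) p
  left_inv := by
    intro p
    induction p using Fin.lastCases with
    | last => simp
    | cast i => simp
  right_inv := by
    intro p
    induction p using Fin.lastCases with
    | last => simp
    | cast i => simp

@[simp] lemma extPerm_castSucc {n : ℕ} (σ : Equiv.Perm (Fin n)) (i : Fin n) :
    extPerm σ i.castSucc = (σ i).castSucc := by
  simp only [extPerm, Equiv.coe_fn_mk]; exact Fin.lastCases_castSucc i

@[simp] lemma extPerm_last {n : ℕ} (σ : Equiv.Perm (Fin n)) :
    extPerm σ (Fin.last n) = Fin.last n := by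
  simp only [extPerm, Equiv.coe_fn_mk]; exact Fin.lastCases_last

@[simp] lemma extPerm_one {n : ℕ} : extPerm (1 : Equiv.Perm (Fin n)) = 1 := by
  ext p
  induction p using Fin.lastCases with
  | last => simp
  | cast i => simp

lemma extPerm_mul {n : ℕ} (σ τ : Equiv.Perm (Fin n)) :
    extPerm (σ * τ) = extPerm σ * extPerm τ := by
  ext p
  induction p using Fin.lastCases with
  | last => simp [Equiv.Perm.mul_apply]
  | cast i => simp [Equiv.Perm.mul_apply]

lemma extPerm_swap {n : ℕ} (a b : Fin n) :
    extPerm (Equiv.swap a b) = Equiv.swap a.castSucc b.castSucc := by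
  ext p
  induction p using Fin.lastCases with
  | last =>
    rw [extPerm_last, Equiv.swap_apply_of_ne_of_ne (Fin.castSucc_lt_last a).ne'
      (Fin.castSucc_lt_last b).ne']
  | cast i =>
    rw [extPerm_castSucc]
    rcases eq_or_ne i a with rfl | ha
    · simp
    · rcases eq_or_ne i b with rfl | hb
      · simp
      · rw [Equiv.swap_apply_of_ne_of_ne ha hb,
          Equiv.swap_apply_of_ne_of_ne (by simpa using ha) (by simpa using hb)]

@[simp] lemma rr_zero {n : ℕ} : (finRotate (n + 1)).symm 0 = Fin.last n := by
  rw [Equiv.symm_apply_eq, finRotate_succ_apply, Fin.last_add_one]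

@[simp] lemma rr_succ {n : ℕ} (i : Fin n) :
    (finRotate (n + 1)).symm i.succ = i.castSucc := by
  rw [Equiv.symm_apply_eq, finRotate_succ_apply]
  ext
  rw [Fin.val_add_one_of_lt (Fin.castSucc_lt_last i)]
  simp

lemma cycleRange_last' {n : ℕ} : Fin.cycleRange (Fin.last n) = finRotate (n + 1) := by
  ext p
  rcases eq_or_ne p (Fin.last n) with rfl | h
  · rw [Fin.cycleRange_self, finRotate_succ_apply, Fin.last_add_one]
  · rw [Fin.cycleRange_of_lt (lt_of_le_of_ne (Fin.le_last p) h), finRotate_succ_apply]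

lemma cycleRange_mul_swap {n k : ℕ} (hk : k + 1 ≤ n) :
    Fin.cycleRange (⟨k + 1, by omega⟩ : Fin (n + 1)) *
      Equiv.swap (⟨k, by omega⟩ : Fin (n + 1)) ⟨k + 1, by omega⟩ =
    Fin.cycleRange ⟨k, by omega⟩ := by
  ext p
  rw [Equiv.Perm.mul_apply]
  rcases eq_or_ne p ⟨k, by omega⟩ with rfl | h1
  · rw [Equiv.swap_apply_left, Fin.cycleRange_self, Fin.cycleRange_self]
  · rcases eq_or_ne p ⟨k + 1, by omega⟩ with rfl | h2
    · rw [Equiv.swap_apply_right, Fin.cycleRange_of_lt (by simp [Fin.lt_def]),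
        Fin.cycleRange_of_gt (by simp [Fin.lt_def])]
      rw [Fin.val_add_one_of_lt (by simp [Fin.lt_def, Fin.last]; omega)]
    · rw [Equiv.swap_apply_of_ne_of_ne h1 h2]
      rcases lt_or_gt_of_ne (fun hv : (p : ℕ) = k => h1 (Fin.ext hv)) with hlt | hgt
      · rw [Fin.cycleRange_of_lt (by simp [Fin.lt_def]; omega),
          Fin.cycleRange_of_lt (by simp [Fin.lt_def]; omega)]
      · have hgt2 : k + 1 < (p : ℕ) :=
          lt_of_le_of_ne hgt (fun hv => h2 (Fin.ext hv.symm))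
        rw [Fin.cycleRange_of_gt (by simp [Fin.lt_def]; omega),
          Fin.cycleRange_of_gt (by simp [Fin.lt_def]; omega)]

lemma extSwap_mul_rr {n k : ℕ} (hk : k + 1 < n) :
    extPerm (Equiv.swap (⟨k, by omega⟩ : Fin n) ⟨k + 1, hk⟩) * (finRotate (n + 1)).symm =
      (finRotate (n + 1)).symm *
        Equiv.swap (⟨k + 1, by omega⟩ : Fin (n + 1)) ⟨k + 2, by omega⟩ := by
  ext p
  rw [Equiv.Perm.mul_apply, Equiv.Perm.mul_apply]
  induction p using Fin.cases with
  | zero =>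
    rw [rr_zero, extPerm_last,
      Equiv.swap_apply_of_ne_of_ne (by simp [Fin.ext_iff]) (by simp [Fin.ext_iff]), rr_zero]
  | succ i =>
    rw [rr_succ, extPerm_castSucc]
    rcases eq_or_ne i ⟨k, by omega⟩ with rfl | h1
    · have hs : Fin.succ (⟨k, by omega⟩ : Fin n) = ⟨k + 1, by omega⟩ := rfl
      rw [hs, Equiv.swap_apply_left, Equiv.swap_apply_left]
      have h2 : (⟨k + 2, by omega⟩ : Fin (n + 1)) = Fin.succ ⟨k + 1, hk⟩ := rfl
      rw [h2, rr_succ]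
    · rcases eq_or_ne i ⟨k + 1, hk⟩ with rfl | h2
      · have hs : Fin.succ (⟨k + 1, hk⟩ : Fin n) = ⟨k + 2, by omega⟩ := rfl
        rw [hs, Equiv.swap_apply_right, Equiv.swap_apply_right]
        have h3 : (⟨k + 1, by omega⟩ : Fin (n + 1)) = Fin.succ ⟨k, by omega⟩ := rfl
        rw [h3, rr_succ]
      · have hv1 : (i : ℕ) ≠ k := fun hv => h1 (Fin.ext hv)
        have hv2 : (i : ℕ) ≠ k + 1 := fun hv => h2 (Fin.ext hv)
        have e1 : Fin.succ i ≠ (⟨k + 1, by omega⟩ : Fin (n + 1)) := by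
          simp [Fin.ext_iff]; omega
        have e2 : Fin.succ i ≠ (⟨k + 2, by omega⟩ : Fin (n + 1)) := by
          simp [Fin.ext_iff]; omega
        rw [Equiv.swap_apply_of_ne_of_ne h1 h2,
          Equiv.swap_apply_of_ne_of_ne e1 e2, rr_succ]

lemma prefixSet_zero {n : ℕ} (σ : Equiv.Perm (Fin n)) : prefixSet σ 0 = ∅ := by
  unfold prefixSet
  simp

lemma prefixSet_univ {n : ℕ} (σ : Equiv.Perm (Fin n)) : prefixSet σ n = Finset.univ := by
  apply Finset.eq_univ_iff_forall.2
  intro y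
  exact Finset.mem_image.2 ⟨σ.symm y, Finset.mem_filter.2 ⟨Finset.mem_univ _, (σ.symm y).isLt⟩,
    σ.apply_symm_apply y⟩

lemma filter_lt_castSucc {n k : ℕ} (hk : k ≤ n) :
    (Finset.univ.filter fun i : Fin (n + 1) => (i : ℕ) < k) =
      (Finset.univ.filter fun i : Fin n => (i : ℕ) < k).image Fin.castSucc := by
  ext x
  simp only [Finset.mem_filter, Finset.mem_image, Finset.mem_univ, true_and]
  constructor
  · intro hx
    exact ⟨⟨(x : ℕ), by omega⟩, hx, Fin.ext (by simp)⟩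
  · rintro ⟨y, hy, rfl⟩
    simpa using hy

lemma filter_lt_succ {n k : ℕ} (hk : 1 ≤ k) :
    (Finset.univ.filter fun i : Fin (n + 1) => (i : ℕ) < k) =
      insert 0 ((Finset.univ.filter fun i : Fin n => (i : ℕ) < k - 1).image Fin.succ) := by
  ext x
  simp only [Finset.mem_insert, Finset.mem_filter, Finset.mem_image, Finset.mem_univ, true_and]
  induction x using Fin.cases with
  | zero => simp; omega
  | succ i =>
    simp only [Fin.val_succ, Fin.ext_iff, Fin.val_succ, Fin.val_zero]
    constructor
    · intro h
      exact Or.inr ⟨i, by omega, rfl⟩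
    · rintro (h | ⟨y, hy, h⟩)
      · omega
      · omega

lemma prefixSet_extPerm {n k : ℕ} (hk : k ≤ n) (σ : Equiv.Perm (Fin n)) :
    prefixSet (extPerm σ) k = (prefixSet σ k).image Fin.castSucc := by
  unfold prefixSet
  rw [filter_lt_castSucc hk, Finset.image_image, Finset.image_image]
  apply Finset.image_congr
  intro x _
  exact extPerm_castSucc σ x

lemma prefixSet_ext_rr {n k : ℕ} (hk : 1 ≤ k) (τ : Equiv.Perm (Fin n)) :
    prefixSet (extPerm τ * (finRotate (n + 1)).symm) k =
      insert (Fin.last n) ((prefixSet τ (k - 1)).image Fin.castSucc) := by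
  unfold prefixSet
  rw [filter_lt_succ hk, Finset.image_insert, Finset.image_image, Finset.image_image]
  congr 1
  · rw [Equiv.Perm.mul_apply, rr_zero, extPerm_last]
  · apply Finset.image_congr
    intro x _
    show (extPerm τ * (finRotate (n + 1)).symm) x.succ = Fin.castSucc (τ x)
    rw [Equiv.Perm.mul_apply, rr_succ, extPerm_castSucc]

lemma prefixSet_mul_fix {n k : ℕ} (μ τ : Equiv.Perm (Fin n))
    (h : ∀ x : Fin n, (x : ℕ) < k → τ x = x) :
    prefixSet (μ * τ) k = prefixSet μ k := by
  unfold prefixSet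
  apply Finset.image_congr
  intro x hx
  have hx' : (x : ℕ) < k := (Finset.mem_filter.1 hx).2
  show (μ * τ) x = μ x
  rw [Equiv.Perm.mul_apply, h x hx']

lemma rr_cycleRange_fix {n c : ℕ} (hc : c ≤ n) (x : Fin (n + 1)) (hx : (x : ℕ) < c) :
    ((finRotate (n + 1)).symm * Fin.cycleRange (⟨c, by omega⟩ : Fin (n + 1))) x = x := by
  rw [Equiv.Perm.mul_apply, Fin.cycleRange_of_lt (by simp [Fin.lt_def]; omega),
    Equiv.symm_apply_eq, finRotate_succ_apply]

lemma image_cycleRange_filter {n c k : ℕ} (hc : c ≤ n) (hck : c < k) :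
    ((Finset.univ.filter fun i : Fin (n + 1) => (i : ℕ) < k)).image
        (Fin.cycleRange (⟨c, by omega⟩ : Fin (n + 1))) =
      Finset.univ.filter fun i : Fin (n + 1) => (i : ℕ) < k := by
  apply Finset.eq_of_subset_of_card_le
  · intro y hy
    obtain ⟨x, hx, rfl⟩ := Finset.mem_image.1 hy
    have hx' : (x : ℕ) < k := (Finset.mem_filter.1 hx).2
    refine Finset.mem_filter.2 ⟨Finset.mem_univ _, ?_⟩
    rcases lt_trichotomy (x : ℕ) c with h | h | h
    · rw [Fin.cycleRange_of_lt (by simp [Fin.lt_def]; omega),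
        Fin.val_add_one_of_lt (by simp [Fin.lt_def, Fin.last]; omega)]
      omega
    · have : x = (⟨c, by omega⟩ : Fin (n + 1)) := Fin.ext h
      rw [this, Fin.cycleRange_self]
      simp; omega
    · rw [Fin.cycleRange_of_gt (by simp [Fin.lt_def]; omega)]
      exact hx'
  · rw [Finset.card_image_of_injective _ (Equiv.injective _)]

lemma prefixSet_B2 {n c k : ℕ} (hc : c ≤ n) (hck : c < k) (μ : Equiv.Perm (Fin (n + 1))) :
    prefixSet (μ * Fin.cycleRange (⟨c, by omega⟩ : Fin (n + 1))) k = prefixSet μ k := by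
  unfold prefixSet
  rw [show ⇑(μ * Fin.cycleRange (⟨c, by omega⟩ : Fin (n + 1))) =
      ⇑μ ∘ ⇑(Fin.cycleRange (⟨c, by omega⟩ : Fin (n + 1))) from rfl,
    ← Finset.image_image, image_cycleRange_filter hc hck]

lemma last_notMem_E {n : ℕ} (S : Finset (Fin n)) :
    Fin.last n ∉ S.image Fin.castSucc := by
  simp only [Finset.mem_image, not_exists]
  intro x
  rintro ⟨-, hx⟩
  exact (Fin.castSucc_lt_last x).ne hx

lemma E_inj {n : ℕ} {S T : Finset (Fin n)}
    (h : S.image Fin.castSucc = T.image Fin.castSucc) : S = T :=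
  Finset.image_injective (Fin.castSucc_injective n) h

lemma insert_last_E_inj {n : ℕ} {S T : Finset (Fin n)}
    (h : insert (Fin.last n) (S.image Fin.castSucc) =
      insert (Fin.last n) (T.image Fin.castSucc)) : S = T := by
  apply E_inj (n := n)
  have := congrArg (fun u => Finset.erase u (Fin.last n)) h
  simpa [Finset.erase_insert (last_notMem_E S), Finset.erase_insert (last_notMem_E T)]
    using this

lemma E_ne_insert {n : ℕ} (A B : Finset (Fin n)) :
    A.image Fin.castSucc ≠ insert (Fin.last n) (B.image Fin.castSucc) := by
  intro h
  exact last_notMem_E A (h ▸ Finset.mem_insert_self _ _)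

lemma exists_E_rep {n : ℕ} {S : Finset (Fin (n + 1))} (h : Fin.last n ∉ S) :
    ∃ T : Finset (Fin n), S = T.image Fin.castSucc := by
  refine ⟨S.preimage Fin.castSucc ((Fin.castSucc_injective n).injOn), ?_⟩
  ext x
  simp only [Finset.mem_image, Finset.mem_preimage]
  constructor
  · intro hx
    have hlt : (x : ℕ) < n := by
      rcases lt_or_eq_of_le (Nat.lt_succ_iff.1 x.isLt) with h' | h'
      · exact h'
      · exact absurd (Fin.ext h' : x = Fin.last n) (fun he => h (he ▸ hx))
    exact ⟨⟨(x : ℕ), hlt⟩, by simpa [Fin.ext_iff] using hx, Fin.ext (by simp)⟩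
  · rintro ⟨y, hy, rfl⟩
    exact hy

lemma card_E {n : ℕ} (S : Finset (Fin n)) :
    (S.image Fin.castSucc).card = S.card :=
  Finset.card_image_of_injective _ (Fin.castSucc_injective n)

end Helpers
section Main

open Equiv Fin Finset

/-- The recursive path construction: phase A (old path with `last` appended),
phase B (move `last` to the front), phase C (reversed old path below `last`). -/
def stepPath (n m : ℕ) (π : ℕ → Equiv.Perm (Fin n)) : ℕ → Equiv.Perm (Fin (n + 1)) :=
  fun i =>
    if i ≤ m then extPerm (π i)
    else if i ≤ m + n then
      extPerm (π m) * (finRotate (n + 1)).symm *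
        Fin.cycleRange (⟨n - (i - m), by omega⟩ : Fin (n + 1))
    else extPerm (π (2 * m + n - i)) * (finRotate (n + 1)).symm

lemma stepPath_A {n m : ℕ} (π : ℕ → Equiv.Perm (Fin n)) {i : ℕ} (hi : i ≤ m) :
    stepPath n m π i = extPerm (π i) := by
  unfold stepPath; rw [if_pos hi]

lemma stepPath_B {n m : ℕ} (π : ℕ → Equiv.Perm (Fin n)) (j : ℕ) (hj : j ≤ n) :
    stepPath n m π (m + j) = extPerm (π m) * (finRotate (n + 1)).symm *
      Fin.cycleRange (⟨n - j, by omega⟩ : Fin (n + 1)) := by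
  rcases Nat.eq_zero_or_pos j with rfl | hj1
  · have h2 : (⟨n - 0, by omega⟩ : Fin (n + 1)) = Fin.last n := rfl
    have h1 : (finRotate (n + 1)).symm * finRotate (n + 1) = 1 := by
      ext x
      rw [Equiv.Perm.mul_apply, Equiv.Perm.one_apply, Equiv.symm_apply_apply]
    rw [h2, cycleRange_last', mul_assoc, h1, mul_one]
    exact stepPath_A π le_rfl
  · unfold stepPath
    rw [if_neg (by omega), if_pos (by omega)]
    have h3 : (⟨n - (m + j - m), by omega⟩ : Fin (n + 1)) = ⟨n - j, by omega⟩ :=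
      Fin.ext (show n - (m + j - m) = n - j by omega)
    rw [h3]

lemma stepPath_C {n m : ℕ} (π : ℕ → Equiv.Perm (Fin n)) (t : ℕ) (ht : t ≤ m) (hn : 1 ≤ n) :
    stepPath n m π (m + n + t) = extPerm (π (m - t)) * (finRotate (n + 1)).symm := by
  rcases Nat.eq_zero_or_pos t with rfl | ht1
  · have h2 : (⟨n - n, by omega⟩ : Fin (n + 1)) = 0 := Fin.ext (show n - n = 0 by omega)
    have hB := stepPath_B (m := m) π n le_rfl
    rw [h2, Fin.cycleRange_zero, mul_one] at hB
    exact hB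
  · unfold stepPath
    rw [if_neg (by omega), if_neg (by omega),
      show 2 * m + n - (m + n + t) = m - t from by omega]

theorem spec_exists : ∀ n : ℕ, 1 ≤ n →
    ∃ (m : ℕ) (π : ℕ → Equiv.Perm (Fin n)),
      π 0 = 1 ∧
      π m = (finRotate n).symm ∧
      (∀ i < m, AdjSwap n (π i) (π (i + 1))) ∧
      ∀ S : Finset (Fin n), S.Nonempty → S ≠ Finset.univ →
        ∃ a b : ℕ, a ≤ b ∧ b ≤ m ∧
          ∀ i ≤ m, (prefixSet (π i) S.card = S ↔ a ≤ i ∧ i ≤ b) := by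
  intro n
  induction n with
  | zero => intro h; omega
  | succ n ih =>
    intro _
    rcases Nat.eq_zero_or_pos n with rfl | hn
    · -- base case : n = 1
      refine ⟨0, fun _ => 1, rfl, ?_, ?_, ?_⟩
      · rw [finRotate_one]; rfl
      · intro i hi; omega
      · intro S hS hSu
        exfalso
        apply hSu
        apply Finset.eq_univ_of_forall
        intro x
        obtain ⟨y, hy⟩ := hS
        have h1 := x.isLt
        have h2 := y.isLt
        rwa [show x = y from Fin.ext (by omega)]
    · obtain ⟨m, π, h0, hm, hstep, hsub⟩ := ih hn
      refine ⟨2 * m + n, stepPath n m π, ?_, ?_, ?_, ?_⟩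
      · rw [stepPath_A π (Nat.zero_le m), h0, extPerm_one]
      · rw [show 2 * m + n = m + n + m from by omega, stepPath_C π m le_rfl hn,
          Nat.sub_self, h0, extPerm_one, one_mul]
      · -- adjacent transpositions
        intro i hi
        rcases Nat.lt_or_ge i m with hA | hA
        · obtain ⟨k, hk, heq⟩ := hstep i hA
          refine ⟨k, by omega, ?_⟩
          rw [stepPath_A π (show i + 1 ≤ m by omega), stepPath_A π (le_of_lt hA), heq,
            extPerm_mul, extPerm_swap]
          rfl
        · rcases Nat.lt_or_ge i (m + n) with hB | hB
          · obtain ⟨j, hj, rfl⟩ : ∃ j, j < n ∧ i = m + j := ⟨i - m, by omega, by omega⟩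
            refine ⟨n - j - 1, by omega, ?_⟩
            rw [show m + j + 1 = m + (j + 1) from by omega, stepPath_B π (j + 1) (by omega),
              stepPath_B π j (by omega)]
            have e2 : (⟨n - (j + 1), by omega⟩ : Fin (n + 1)) = ⟨n - j - 1, by omega⟩ :=
              Fin.ext (show n - (j + 1) = n - j - 1 by omega)
            have e3 : (⟨n - j, by omega⟩ : Fin (n + 1)) = ⟨n - j - 1 + 1, by omega⟩ :=
              Fin.ext (show n - j = n - j - 1 + 1 by omega)
            rw [e2, e3, mul_assoc (extPerm (π m) * (finRotate (n + 1)).symm),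
              cycleRange_mul_swap (show n - j - 1 + 1 ≤ n by omega)]
          · obtain ⟨t, ht, rfl⟩ : ∃ t, t < m ∧ i = m + n + t := ⟨i - m - n, by omega, by omega⟩
            obtain ⟨k, hk, heq⟩ := hstep (m - t - 1) (by omega)
            rw [show m - t - 1 + 1 = m - t from by omega] at heq
            refine ⟨k + 1, by omega, ?_⟩
            rw [show m + n + t + 1 = m + n + (t + 1) from by omega,
              stepPath_C π (t + 1) (by omega) hn, stepPath_C π t (by omega) hn,
              show m - (t + 1) = m - t - 1 from by omega, heq, extPerm_mul,
              mul_assoc (extPerm (π (m - t - 1))), extSwap_mul_rr hk,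
              mul_assoc (extPerm (π (m - t - 1))), mul_assoc ((finRotate (n + 1)).symm),
              Equiv.swap_mul_self, mul_one]
      · -- the prefix-set interval condition
        intro S hS hSu
        have hk1 : 1 ≤ S.card := Finset.card_pos.2 hS
        have hkn : S.card ≤ n := by
          have h1 : S.card < n + 1 := by
            simpa using Finset.card_lt_card (Finset.ssubset_univ_iff.2 hSu)
          omega
        have hPA : ∀ i ≤ m, ∀ k ≤ n, prefixSet (stepPath n m π i) k =
            (prefixSet (π i) k).image Fin.castSucc := by
          intro i hi k hkn'
          rw [stepPath_A π hi, prefixSet_extPerm hkn']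
        have hPB1 : ∀ j ≤ n, ∀ k, k ≤ n - j → prefixSet (stepPath n m π (m + j)) k =
            (prefixSet (π m) k).image Fin.castSucc := by
          intro j hj k hkj
          rw [stepPath_B π j hj, mul_assoc, prefixSet_mul_fix _ _
            (fun x hx => rr_cycleRange_fix (show n - j ≤ n by omega) x (by omega)),
            prefixSet_extPerm (by omega)]
        have hPB2 : ∀ j ≤ n, ∀ k, n - j < k → 1 ≤ k →
            prefixSet (stepPath n m π (m + j)) k =
              insert (Fin.last n) ((prefixSet (π m) (k - 1)).image Fin.castSucc) := by
          intro j hj k hkj hk1'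
          rw [stepPath_B π j hj, prefixSet_B2 (show n - j ≤ n by omega) hkj,
            prefixSet_ext_rr hk1']
        have hPC : ∀ t ≤ m, ∀ k, 1 ≤ k → prefixSet (stepPath n m π (m + n + t)) k =
            insert (Fin.last n) ((prefixSet (π (m - t)) (k - 1)).image Fin.castSucc) := by
          intro t ht k hk1'
          rw [stepPath_C π t ht hn, prefixSet_ext_rr hk1']
        by_cases hlast : Fin.last n ∈ S
        · -- `last ∈ S`
          obtain ⟨T, hTrep⟩ := exists_E_rep (Finset.notMem_erase (Fin.last n) S)
          have hSrep : S = insert (Fin.last n) (T.image Fin.castSucc) := by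
            rw [← hTrep, Finset.insert_erase hlast]
          have hcard : S.card = T.card + 1 := by
            rw [hSrep, Finset.card_insert_of_notMem (last_notMem_E T), card_E]
          by_cases hT0 : T = ∅
          · -- `S = {last}`
            subst hT0
            have hc1 : S.card = 1 := by rw [hcard]; simp
            refine ⟨m + n, 2 * m + n, by omega, le_rfl, ?_⟩
            intro i hi
            rcases Nat.lt_or_ge i (m + 1) with hiA | hiA
            · rw [hc1, hPA i (by omega) 1 (by omega), hSrep]
              exact iff_of_false (E_ne_insert _ _) (by omega)
            · rcases Nat.lt_or_ge i (m + n + 1) with hiB | hiB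
              · obtain ⟨j, hj1, hjn, rfl⟩ : ∃ j, 1 ≤ j ∧ j ≤ n ∧ i = m + j :=
                  ⟨i - m, by omega, by omega, by omega⟩
                by_cases hkj : (1 : ℕ) ≤ n - j
                · rw [hc1, hPB1 j hjn 1 hkj, hSrep]
                  exact iff_of_false (E_ne_insert _ _) (by omega)
                · rw [hc1, hPB2 j hjn 1 (by omega) le_rfl, hSrep,
                    show (1 : ℕ) - 1 = 0 from rfl, prefixSet_zero, Finset.image_empty]
                  exact iff_of_true rfl ⟨by omega, by omega⟩
              · obtain ⟨t, ht1, htm, rfl⟩ : ∃ t, 1 ≤ t ∧ t ≤ m ∧ i = m + n + t :=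
                  ⟨i - m - n, by omega, by omega, by omega⟩
                rw [hc1, hPC t htm 1 le_rfl, hSrep,
                  show (1 : ℕ) - 1 = 0 from rfl, prefixSet_zero, Finset.image_empty]
                exact iff_of_true rfl ⟨by omega, by omega⟩
          · -- `T` nonempty (and proper)
            have hT : T.Nonempty := Finset.nonempty_of_ne_empty hT0
            have hTu : T ≠ Finset.univ := by
              intro h
              have hTc : T.card = n := by rw [h]; simp
              omega
            obtain ⟨a, b, hab, hbm, hiff⟩ := hsub T hT hTu
            have hbiff : prefixSet (π m) T.card = T ↔ b = m := by
              rw [hiff m le_rfl]; omega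
            have hTk : T.card = S.card - 1 := by omega
            have hSne : ∀ A : Finset (Fin n), A.image Fin.castSucc ≠ S :=
              fun A h => E_ne_insert A T (h.trans hSrep)
            have hSins : ∀ A : Finset (Fin n),
                insert (Fin.last n) (A.image Fin.castSucc) = S ↔ A = T := by
              intro A
              rw [hSrep]
              exact ⟨fun h => insert_last_E_inj h, fun h => by rw [h]⟩
            by_cases hbm' : b = m
            · refine ⟨m + n - S.card + 1, 2 * m + n - a, by omega, by omega, ?_⟩
              intro i hi
              rcases Nat.lt_or_ge i (m + 1) with hiA | hiA
              · rw [hPA i (by omega) S.card hkn]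
                exact iff_of_false (hSne _) (by omega)
              · rcases Nat.lt_or_ge i (m + n + 1) with hiB | hiB
                · obtain ⟨j, hj1, hjn, rfl⟩ : ∃ j, 1 ≤ j ∧ j ≤ n ∧ i = m + j :=
                    ⟨i - m, by omega, by omega, by omega⟩
                  by_cases hkj : S.card ≤ n - j
                  · rw [hPB1 j hjn S.card hkj]
                    exact iff_of_false (hSne _) (by omega)
                  · rw [hPB2 j hjn S.card (by omega) hk1, ← hTk,
                      hSins (prefixSet (π m) T.card), hbiff]
                    exact iff_of_true hbm' ⟨by omega, by omega⟩
                · obtain ⟨t, ht1, htm, rfl⟩ : ∃ t, 1 ≤ t ∧ t ≤ m ∧ i = m + n + t :=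
                    ⟨i - m - n, by omega, by omega, by omega⟩
                  rw [hPC t htm S.card hk1, ← hTk,
                    hSins (prefixSet (π (m - t)) T.card), hiff (m - t) (by omega)]
                  omega
            · -- b < m
              refine ⟨2 * m + n - b, 2 * m + n - a, by omega, by omega, ?_⟩
              intro i hi
              rcases Nat.lt_or_ge i (m + 1) with hiA | hiA
              · rw [hPA i (by omega) S.card hkn]
                exact iff_of_false (hSne _) (by omega)
              · rcases Nat.lt_or_ge i (m + n + 1) with hiB | hiB
                · obtain ⟨j, hj1, hjn, rfl⟩ : ∃ j, 1 ≤ j ∧ j ≤ n ∧ i = m + j :=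
                    ⟨i - m, by omega, by omega, by omega⟩
                  by_cases hkj : S.card ≤ n - j
                  · rw [hPB1 j hjn S.card hkj]
                    exact iff_of_false (hSne _) (by omega)
                  · rw [hPB2 j hjn S.card (by omega) hk1, ← hTk,
                      hSins (prefixSet (π m) T.card), hbiff]
                    exact iff_of_false hbm' (by omega)
                · obtain ⟨t, ht1, htm, rfl⟩ : ∃ t, 1 ≤ t ∧ t ≤ m ∧ i = m + n + t :=
                    ⟨i - m - n, by omega, by omega, by omega⟩
                  rw [hPC t htm S.card hk1, ← hTk,
                    hSins (prefixSet (π (m - t)) T.card), hiff (m - t) (by omega)]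
                  omega
        · -- `last ∉ S`
          obtain ⟨T, rfl⟩ := exists_E_rep hlast
          have hcard : (T.image Fin.castSucc).card = T.card := card_E T
          by_cases hTu : T = Finset.univ
          · subst hTu
            have hcn : ((Finset.univ : Finset (Fin n)).image Fin.castSucc).card = n := by
              rw [card_E]; simp
            refine ⟨0, m, Nat.zero_le m, by omega, ?_⟩
            intro i hi
            rcases Nat.lt_or_ge i (m + 1) with hiA | hiA
            · rw [hcn, hPA i (by omega) n le_rfl, prefixSet_univ]
              exact iff_of_true rfl ⟨Nat.zero_le i, by omega⟩
            · rcases Nat.lt_or_ge i (m + n + 1) with hiB | hiB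
              · obtain ⟨j, hj1, hjn, rfl⟩ : ∃ j, 1 ≤ j ∧ j ≤ n ∧ i = m + j :=
                  ⟨i - m, by omega, by omega, by omega⟩
                rw [hcn, hPB2 j hjn n (by omega) (by omega)]
                exact iff_of_false (fun h => (E_ne_insert _ _) h.symm) (by omega)
              · obtain ⟨t, ht1, htm, rfl⟩ : ∃ t, 1 ≤ t ∧ t ≤ m ∧ i = m + n + t :=
                  ⟨i - m - n, by omega, by omega, by omega⟩
                rw [hcn, hPC t htm n (by omega)]
                exact iff_of_false (fun h => (E_ne_insert _ _) h.symm) (by omega)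
          · -- `T` proper nonempty
            have hT : T.Nonempty := by
              obtain ⟨y, hy⟩ := hS
              obtain ⟨x, hx, -⟩ := Finset.mem_image.1 hy
              exact ⟨x, hx⟩
            have hkT : T.card < n := by
              have h1 : T.card < (Finset.univ : Finset (Fin n)).card :=
                Finset.card_lt_card (Finset.ssubset_univ_iff.2 hTu)
              simpa using h1
            obtain ⟨a, b, hab, hbm, hiff⟩ := hsub T hT hTu
            have hbiff : prefixSet (π m) T.card = T ↔ b = m := by
              rw [hiff m le_rfl]; omega
            by_cases hbm' : b = m
            · refine ⟨a, m + (n - T.card), by omega, by omega, ?_⟩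
              intro i hi
              rcases Nat.lt_or_ge i (m + 1) with hiA | hiA
              · rw [hcard, hPA i (by omega) T.card (by omega)]
                constructor
                · intro h
                  have h2 := (hiff i (by omega)).1 (E_inj h)
                  omega
                · intro h
                  rw [(hiff i (by omega)).2 ⟨by omega, by omega⟩]
              · rcases Nat.lt_or_ge i (m + n + 1) with hiB | hiB
                · obtain ⟨j, hj1, hjn, rfl⟩ : ∃ j, 1 ≤ j ∧ j ≤ n ∧ i = m + j :=
                    ⟨i - m, by omega, by omega, by omega⟩
                  by_cases hkj : T.card ≤ n - j
                  · rw [hcard, hPB1 j hjn T.card hkj, hbiff.2 hbm']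
                    exact iff_of_true rfl ⟨by omega, by omega⟩
                  · rw [hcard, hPB2 j hjn T.card (by omega) (by omega)]
                    exact iff_of_false (fun h => (E_ne_insert _ _) h.symm) (by omega)
                · obtain ⟨t, ht1, htm, rfl⟩ : ∃ t, 1 ≤ t ∧ t ≤ m ∧ i = m + n + t :=
                    ⟨i - m - n, by omega, by omega, by omega⟩
                  rw [hcard, hPC t htm T.card (by omega)]
                  exact iff_of_false (fun h => (E_ne_insert _ _) h.symm) (by omega)
            · refine ⟨a, b, hab, by omega, ?_⟩
              intro i hi
              rcases Nat.lt_or_ge i (m + 1) with hiA | hiA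
              · rw [hcard, hPA i (by omega) T.card (by omega)]
                constructor
                · intro h
                  exact (hiff i (by omega)).1 (E_inj h)
                · intro h
                  rw [(hiff i (by omega)).2 h]
              · rcases Nat.lt_or_ge i (m + n + 1) with hiB | hiB
                · obtain ⟨j, hj1, hjn, rfl⟩ : ∃ j, 1 ≤ j ∧ j ≤ n ∧ i = m + j :=
                    ⟨i - m, by omega, by omega, by omega⟩
                  by_cases hkj : T.card ≤ n - j
                  · rw [hcard, hPB1 j hjn T.card hkj]
                    exact iff_of_false (fun h => hbm' (hbiff.1 (E_inj h))) (by omega)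
                  · rw [hcard, hPB2 j hjn T.card (by omega) (by omega)]
                    exact iff_of_false (fun h => (E_ne_insert _ _) h.symm) (by omega)
                · obtain ⟨t, ht1, htm, rfl⟩ : ∃ t, 1 ≤ t ∧ t ≤ m ∧ i = m + n + t :=
                    ⟨i - m - n, by omega, by omega, by omega⟩
                  rw [hcard, hPC t htm T.card (by omega)]
                  exact iff_of_false (fun h => (E_ne_insert _ _) h.symm) (by omega)

end Main

/-- Facet-Hamiltonian path of the permutahedron from the identity `(1,2,…,n)` to
`(n,1,2,…,n-1)`: consecutive permutations differ by an adjacent transposition and every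
nonempty proper subset occurs as a prefix-set on a nonempty contiguous interval of indices. -/
theorem permutahedron_facet_hamiltonian_path (n : ℕ) (hn : 1 ≤ n) :
    ∃ (m : ℕ) (π : ℕ → Equiv.Perm (Fin n)),
      π 0 = 1 ∧
      π m = (finRotate n).symm ∧
      (∀ i < m, AdjSwap n (π i) (π (i + 1))) ∧
      ∀ S : Finset (Fin n), S.Nonempty → S ≠ Finset.univ →
        ∃ a b : ℕ, a ≤ b ∧ b ≤ m ∧
          ∀ i ≤ m, (prefixSet (π i) S.card = S ↔ a ≤ i ∧ i ≤ b) := by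
  exact spec_exists n hn
end

section
/- Let n ≥ 2 and suppose π_0, π_1, ..., π_{m−1}, π_0 is a cyclic sequence of distinct permutations of {1,...,n} in which consecutive permutations differ by a single adjacent transposition, and such that every nonempty proper subset of {1,...,n} occurs as a prefix-set of the permutations in exactly one nonempty contiguous cyclic interval of the sequence. Then m = 2^n − 2. -/
open Finset

lemma Fintype.card_eq_of_existsUnique {α β : Type*} [Fintype α] [Fintype β] (R : α → β → Prop)
    (hα : ∀ a, ∃! b, R a b) (hβ : ∀ b, ∃! a, R a b) : Fintype.card α = Fintype.card β := by
  choose f hf using hα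
  refine Fintype.card_of_bijective (f := f) ⟨fun a a' h => ?_, fun b => ?_⟩
  · exact (hβ (f a)).unique (hf a).1 (h ▸ (hf a').1)
  · obtain ⟨a, ha, -⟩ := hβ b
    exact ⟨a, ((hf a).2 b ha).symm⟩

lemma Fintype.card_nonempty_ne_univ (α : Type*) [Fintype α] [DecidableEq α] :
    Fintype.card {s : Finset α // s.Nonempty ∧ s ≠ univ} = 2 ^ Fintype.card α - 2 := by
  rw [Fintype.card_subtype]
  have : ({s | s.Nonempty ∧ s ≠ univ} : Finset (Finset α)) = univ \ {∅, univ} := by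
    ext s
    simp [nonempty_iff_ne_empty]
  rw [this, card_sdiff_of_subset (subset_univ _), card_univ, Fintype.card_finset]
  rcases isEmpty_or_nonempty α with hα | hα
  · simp [Fintype.card_eq_zero]
  · rw [card_pair univ_nonempty.ne_empty.symm]

lemma Finset.exists_ne_card_eq_of_nonempty_of_ne_univ {α : Type*} [Fintype α] [DecidableEq α]
    {s : Finset α} (hs : s.Nonempty) (hs' : s ≠ univ) :
    ∃ t : Finset α, t ≠ s ∧ #t = #s ∧ t.Nonempty ∧ t ≠ univ := by
  obtain ⟨x, hx⟩ := hs
  obtain ⟨y, hy⟩ : ∃ y, y ∉ s := by simpa [eq_univ_iff_forall] using hs'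
  have hyt : y ∈ s.map (Equiv.swap x y).toEmbedding := by simpa [mem_map_equiv] using hx
  refine ⟨_, fun h => hy (h ▸ hyt), card_map _, ⟨y, hyt⟩, fun h => hy ?_⟩
  have hxt : x ∈ s.map (Equiv.swap x y).toEmbedding := h ▸ mem_univ x
  simpa [mem_map_equiv] using hxt

namespace ZMod

variable {m : ℕ}

lemma exists_apply_and_not_apply_add_one [NeZero m] {P : ZMod m → Prop} (h : ∃ j, P j)
    (h' : ∃ j, ¬ P j) : ∃ j, P j ∧ ¬ P (j + 1) := by
  obtain ⟨a, ha⟩ := h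
  obtain ⟨b, hb⟩ := h'
  by_contra! hstep
  have hall : ∀ i : ℕ, P (a + i) := by
    intro i
    induction i with
    | zero => simpa using ha
    | succ i ih => simpa [add_assoc] using hstep _ ih
  exact hb (by simpa using hall (b - a).val)

lemma eq_of_apply_and_not_apply_add_one {P : ZMod m → Prop} {a : ZMod m} {len : ℕ}
    (hP : ∀ j, P j ↔ ∃ i < len, j = a + i) {j : ZMod m} (hj : P j ∧ ¬ P (j + 1)) :
    j = a + (len - 1 : ℕ) := by
  obtain ⟨i, hi, rfl⟩ := (hP j).1 hj.1
  have : ¬ i + 1 < len := fun h => hj.2 ((hP _).2 ⟨i + 1, h, by push_cast; ring⟩)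
  rw [show i = len - 1 by omega]

lemma existsUnique_apply_and_not_apply_add_one [NeZero m] {P : ZMod m → Prop} {a : ZMod m}
    {len : ℕ} (hlen : 1 ≤ len) (hP : ∀ j, P j ↔ ∃ i < len, j = a + i) (h' : ∃ j, ¬ P j) :
    ∃! j, P j ∧ ¬ P (j + 1) := by
  obtain ⟨j, hj⟩ := exists_apply_and_not_apply_add_one ⟨a, (hP a).2 ⟨0, hlen, by simp⟩⟩ h'
  exact ⟨j, hj, fun j' hj' => (eq_of_apply_and_not_apply_add_one hP hj').trans
    (eq_of_apply_and_not_apply_add_one hP hj).symm⟩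

end ZMod

section PrefixSet

variable {n : ℕ}

lemma mem_prefixSet {π : Equiv.Perm (Fin n)} {t : ℕ} {x : Fin n} :
    x ∈ prefixSet π t ↔ (π.symm x : ℕ) < t := by
  simp [prefixSet, ← π.eq_symm_apply]

lemma card_prefixSet (π : Equiv.Perm (Fin n)) {t : ℕ} (ht : t ≤ n) : #(prefixSet π t) = t := by
  rw [prefixSet, card_image_of_injective _ π.injective, Fin.card_filter_val_lt, min_eq_right ht]

lemma val_swap_lt_iff {k t : ℕ} (hk : k + 1 < n) (ht : t ≠ k + 1) (y : Fin n) :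
    (Equiv.swap (⟨k, Nat.lt_of_succ_lt hk⟩ : Fin n) ⟨k + 1, hk⟩ y : ℕ) < t ↔ (y : ℕ) < t := by
  rcases eq_or_ne y ⟨k, Nat.lt_of_succ_lt hk⟩ with rfl | h₁
  · simp only [Equiv.swap_apply_left]; omega
  rcases eq_or_ne y ⟨k + 1, hk⟩ with rfl | h₂
  · simp only [Equiv.swap_apply_right]; omega
  rw [Equiv.swap_apply_of_ne_of_ne h₁ h₂]

lemma AdjSwap.exists_prefixSet_ne_iff_eq {π σ : Equiv.Perm (Fin n)} (h : AdjSwap n π σ) :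
    ∃ t, 0 < t ∧ t < n ∧ ∀ t', prefixSet σ t' ≠ prefixSet π t' ↔ t' = t := by
  obtain ⟨k, hk, rfl⟩ := h
  refine ⟨k + 1, k.succ_pos, hk, fun t => ⟨fun hne => ?_, ?_⟩⟩
  · by_contra ht
    refine hne (ext fun x => ?_)
    simp only [mem_prefixSet, Equiv.Perm.mul_def, Equiv.symm_trans_apply, Equiv.symm_swap]
    exact val_swap_lt_iff hk ht _
  · rintro rfl heq
    have hmem : π ⟨k, Nat.lt_of_succ_lt hk⟩ ∈ prefixSet π (k + 1) := mem_prefixSet.2 (by simp)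
    rw [← heq, mem_prefixSet] at hmem
    simp [Equiv.Perm.mul_def] at hmem

end PrefixSet

section Cycle

variable {n m : ℕ}

def ExitsAt (π : ZMod m → Equiv.Perm (Fin n)) (S : Finset (Fin n)) (j : ZMod m) : Prop :=
  prefixSet (π j) #S = S ∧ prefixSet (π (j + 1)) #S ≠ S

lemma AdjSwap.existsUnique_exitsAt {π : ZMod m → Equiv.Perm (Fin n)} {j : ZMod m}
    (h : AdjSwap n (π j) (π (j + 1))) :
    ∃! S : {S : Finset (Fin n) // S.Nonempty ∧ S ≠ univ}, ExitsAt π S j := by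
  obtain ⟨t, ht₀, htn, hchange⟩ := h.exists_prefixSet_ne_iff_eq
  have hcard : #(prefixSet (π j) t) = t := card_prefixSet _ htn.le
  have hS : (prefixSet (π j) t).Nonempty := card_pos.1 (by omega)
  have hS' : prefixSet (π j) t ≠ univ := fun h => by simp [h] at hcard; omega
  refine ⟨⟨_, hS, hS'⟩, ⟨by rw [hcard], by rw [hcard]; exact (hchange t).2 rfl⟩, ?_⟩
  intro T hT
  have hTcard : #T.1 = t := (hchange _).1 (by rw [hT.1]; exact hT.2)
  exact Subtype.ext (by rw [← hT.1, hTcard])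

end Cycle

theorem facet_hamiltonian_cycle_length_general (n m : ℕ) (hm : 1 ≤ m)
    (π : ZMod m → Equiv.Perm (Fin n))
    (hadj : ∀ j, AdjSwap n (π j) (π (j + 1)))
    (hint : ∀ S : Finset (Fin n), S.Nonempty → S ≠ Finset.univ →
      ∃ (a : ZMod m) (len : ℕ), 1 ≤ len ∧ len ≤ m ∧
        ∀ j, prefixSet (π j) S.card = S ↔ ∃ i : ℕ, i < len ∧ j = a + (i : ZMod m)) :
    m = 2 ^ n - 2 := by
  have : NeZero m := ⟨by omega⟩
  have hexit (S : {S : Finset (Fin n) // S.Nonempty ∧ S ≠ univ}) : ∃! j, ExitsAt π S j := by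
    obtain ⟨S, hS, hS'⟩ := S
    obtain ⟨a, len, hlen, -, hP⟩ := hint S hS hS'
    obtain ⟨T, hTS, hTcard, hT, hT'⟩ := exists_ne_card_eq_of_nonempty_of_ne_univ hS hS'
    obtain ⟨b, len', hlen', -, hQ⟩ := hint T hT hT'
    refine ZMod.existsUnique_apply_and_not_apply_add_one hlen hP ⟨b, fun hb => hTS ?_⟩
    rw [← (hQ b).2 ⟨0, hlen', by simp⟩, hTcard, hb]
  calc m = Fintype.card (ZMod m) := (ZMod.card m).symm
    _ = Fintype.card {S : Finset (Fin n) // S.Nonempty ∧ S ≠ univ} :=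
      Fintype.card_eq_of_existsUnique (fun j S => ExitsAt π S j)
        (fun j => (hadj j).existsUnique_exitsAt) hexit
    _ = 2 ^ n - 2 := by rw [Fintype.card_nonempty_ne_univ, Fintype.card_fin]

/-- A facet-Hamiltonian cycle of the permutahedron has length exactly `2^n - 2`:
a cyclic sequence of distinct permutations of `{1,…,n}`, consecutive ones differing by an
adjacent transposition, in which every nonempty proper subset occurs as a prefix-set on
exactly one nonempty contiguous cyclic interval, has `2^n - 2` terms. -/
theorem facet_hamiltonian_cycle_length (n m : ℕ) (hn : 2 ≤ n) (hm : 1 ≤ m)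
    (π : ZMod m → Equiv.Perm (Fin n))
    (hdistinct : Function.Injective π)
    (hadj : ∀ j, AdjSwap n (π j) (π (j + 1)))
    (hint : ∀ S : Finset (Fin n), S.Nonempty → S ≠ Finset.univ →
      ∃ (a : ZMod m) (len : ℕ), 1 ≤ len ∧ len ≤ m ∧
        ∀ j, prefixSet (π j) S.card = S ↔ ∃ i : ℕ, i < len ∧ j = a + (i : ZMod m)) :
    m = 2 ^ n - 2 :=
  facet_hamiltonian_cycle_length_general n m hm π hadj hint
end

section
/- For every n ≥ 2, the graph on all permutations of {1,...,n}, with edges between permutations differing by a single adjacent transposition, has a Hamiltonian cycle (for n ≥ 3) and a Hamiltonian path (for all n ≥ 2). -/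
/-- The graph on all permutations of `{1,…,n}`, with edges between permutations
differing by a single adjacent transposition (the skeleton of the permutahedron). -/
def permGraph (n : ℕ) : SimpleGraph (Equiv.Perm (Fin n)) :=
  SimpleGraph.fromRel fun π σ => ∃ (k : ℕ) (hk : k + 1 < n),
    σ = π * Equiv.swap (⟨k, Nat.lt_of_succ_lt hk⟩ : Fin n) ⟨k + 1, hk⟩

/-!
Steinhaus–Johnson–Trotter. By induction on `n ≥ 2`, `permGraph n` has a Hamiltonian path whose
endpoints are adjacent. A permutation of `Fin (n + 1)` is a permutation `π` of `Fin n` with a new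
value inserted at some position `j`. Follow the path for `n`, and for each `π` on it sweep the new
value through all positions, alternately left to right and right to left. Consecutive insertions
differ by an adjacent transposition, and so do the insertions into two neighbours `π, σ` at the
same extreme position `0` or `n`, where the sweep turns round. Since `n!` is even, the last sweep
ends at position `0`, where the first one starts, so the new endpoints are again adjacent.
-/

open Equiv

namespace List

variable {α β : Type*} {k : ℕ}

/-- The rows `ofFn (f a)`, `a ∈ l`, traversed alternately forwards and backwards. -/
def zigzag (f : α → Fin (k + 1) → β) : List α → List β
  | [] => []
  | a :: l => ofFn (f a) ++ zigzag (fun a => f a ∘ Fin.rev) l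

theorem mem_zigzag {f : α → Fin (k + 1) → β} {l : List α} {b : β} :
    b ∈ zigzag f l ↔ ∃ a ∈ l, ∃ i, f a i = b := by
  induction l generalizing f with
  | nil => simp [zigzag]
  | cons a l ih =>
    have hrev (a : α) : (∃ i : Fin (k + 1), f a i.rev = b) ↔ ∃ i, f a i = b :=
      (Fin.rev_surjective.exists (p := fun i => f a i = b)).symm
    simp only [zigzag, mem_append, mem_ofFn, ih, mem_cons, exists_eq_or_imp, Function.comp_apply,
      hrev]

theorem nodup_zigzag {f : α → Fin (k + 1) → β} (hf : Function.Injective (Function.uncurry f))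
    {l : List α} (hl : l.Nodup) : (zigzag f l).Nodup := by
  induction l generalizing f with
  | nil => exact nodup_nil
  | cons a l ih =>
    rw [nodup_cons] at hl
    refine nodup_append.mpr ⟨nodup_ofFn.mpr fun i j h => ?_, ih ?_ hl.2, ?_⟩
    · exact congrArg Prod.snd (hf (a₁ := (a, i)) (a₂ := (a, j)) h)
    · rintro ⟨a, i⟩ ⟨b, j⟩ h
      simpa using hf (a₁ := (a, i.rev)) (a₂ := (b, j.rev)) h
    · rintro _ hx _ hy rfl
      obtain ⟨i, rfl⟩ := mem_ofFn.mp hx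
      obtain ⟨b, hb, j, h⟩ := mem_zigzag.mp hy
      obtain rfl : b = a := congrArg Prod.fst (hf (a₁ := (b, j.rev)) (a₂ := (a, i)) h)
      exact hl.1 hb

theorem head?_zigzag_cons (f : α → Fin (k + 1) → β) (a : α) (l : List α) :
    (zigzag f (a :: l)).head? = some (f a 0) := by
  simp [zigzag, ofFn_succ]

theorem isChain_zigzag {R : α → α → Prop} {G : SimpleGraph β}
    {f : α → Fin (k + 1) → β} (hrow : ∀ a (i : Fin k), G.Adj (f a i.castSucc) (f a i.succ))
    (hends : ∀ a b, R a b → G.Adj (f a 0) (f b 0) ∧ G.Adj (f a (Fin.last k)) (f b (Fin.last k)))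
    {l : List α} (hl : l.IsChain R) : (zigzag f l).IsChain G.Adj := by
  induction l generalizing f with
  | nil => exact .nil
  | cons a l ih =>
    refine isChain_append.mpr ⟨isChain_ofFn.mpr fun i hi => hrow a ⟨i, by omega⟩, ?_, ?_⟩
    · refine ih (fun a i => ?_) (fun a b h => ?_) hl.tail
      · simpa [Fin.rev_castSucc, Fin.rev_succ] using (hrow a i.rev).symm
      · simpa using (hends a b h).symm
    · cases l with
      | nil => simp [zigzag]
      | cons b l =>
        simp only [ofFn_succ_last, getLast?_append, head?_zigzag_cons]
        simpa using (hends a b (isChain_cons_cons.mp hl).1).2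

theorem getLast?_zigzag_append_singleton (f : α → Fin (k + 1) → β) (l : List α) (a : α) :
    (zigzag f (l ++ [a])).getLast? =
      some (f a (if Even l.length then Fin.last k else 0)) := by
  induction l generalizing f with
  | nil => simp [zigzag, ofFn_succ_last, -ofFn_succ]
  | cons b l ih =>
    simp only [cons_append, zigzag, getLast?_append, ih, Option.some_or, length_cons,
      Nat.even_add_one, Function.comp_apply]
    split_ifs <;> simp

end List

namespace SimpleGraph

variable {V W : Type*} {G : SimpleGraph V}

theorem exists_walk_support_eq {l : List V} (hl : l.IsChain G.Adj) {u v : V}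
    (hu : l.head? = some u) (hv : l.getLast? = some v) : ∃ p : G.Walk u v, p.support = l := by
  have hne : l ≠ [] := by rintro rfl; simp at hu
  rw [List.head?_eq_some_head hne, Option.some_inj] at hu
  rw [List.getLast?_eq_some_getLast hne, Option.some_inj] at hv
  exact ⟨(Walk.ofSupport l hne hl).copy hu hv, by simp [Walk.support_ofSupport]⟩

namespace Walk

variable [DecidableEq V]

theorem IsHamiltonian.isHamiltonianCycle_cons {u v : V} {p : G.Walk u v}
    (hp : p.IsHamiltonian) (h : G.Adj v u) (hlen : p.length ≠ 1) :
    (cons h p).IsHamiltonianCycle := by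
  refine ⟨(cons_isCycle_iff p h).mpr ⟨hp.isPath, fun he => hlen ?_⟩, fun w => ?_⟩
  · exact hp.isPath.length_eq_one_of_mem_edges (Sym2.eq_swap ▸ he)
  · simpa [tail_cons] using hp w

theorem IsHamiltonian.exists_isHamiltonian_zigzag [DecidableEq W] {H : SimpleGraph W} {k : ℕ}
    {u v : V} {p : G.Walk u v} (hp : p.IsHamiltonian) (hodd : Odd p.length)
    {f : V → Fin (k + 1) → W} (hf : Function.Bijective (Function.uncurry f))
    (hrow : ∀ a (i : Fin k), H.Adj (f a i.castSucc) (f a i.succ))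
    (hends : ∀ a b, G.Adj a b →
      H.Adj (f a 0) (f b 0) ∧ H.Adj (f a (Fin.last k)) (f b (Fin.last k))) :
    ∃ q : H.Walk (f u 0) (f v 0), q.IsHamiltonian := by
  have hhead : (List.zigzag f p.support).head? = some (f u 0) := by
    rw [← cons_tail_support, List.head?_zigzag_cons]
  obtain ⟨l, hl⟩ : ∃ l, p.support = l ++ [v] :=
    List.getLast?_eq_some_iff.mp (by simp [List.getLast?_eq_some_getLast, getLast_support])
  have hlast : (List.zigzag f p.support).getLast? = some (f v 0) := by
    have hlen : l.length = p.length := by simpa [hl] using p.length_support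
    rw [hl, List.getLast?_zigzag_append_singleton, if_neg (by rwa [Nat.not_even_iff_odd, hlen])]
  obtain ⟨q, hq⟩ := exists_walk_support_eq
    (List.isChain_zigzag hrow hends p.isChain_adj_support) hhead hlast
  refine ⟨q, IsPath.isHamiltonian_of_mem ?_ fun w => ?_⟩
  · rw [isPath_def, hq]
    exact List.nodup_zigzag hf.injective ((isPath_def p).mp hp.isPath)
  · obtain ⟨⟨a, i⟩, rfl⟩ := hf.surjective w
    rw [hq, List.mem_zigzag]
    exact ⟨a, hp.mem_support a, i, rfl⟩

end Walk

end SimpleGraph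

theorem Equiv.Perm.viaEmbedding_swap {α β : Type*} [DecidableEq α] [DecidableEq β] (ι : α ↪ β)
    (a b : α) : (swap a b).viaEmbedding ι = swap (ι a) (ι b) := by
  ext x
  by_cases hx : x ∈ Set.range ι
  · obtain ⟨y, rfl⟩ := hx
    rw [Perm.viaEmbedding_apply, ι.injective.swap_apply]
  · rw [Perm.viaEmbedding_apply_of_notMem _ _ _ hx,
      swap_apply_of_ne_of_ne (fun h => hx ⟨a, h.symm⟩) (fun h => hx ⟨b, h.symm⟩)]

namespace Fin

variable {n : ℕ}

theorem cycleRange_succ (i : Fin n) :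
    i.succ.cycleRange = i.castSucc.cycleRange * swap i.castSucc i.succ := by
  ext x
  have := i.isLt
  simp only [Perm.mul_apply, cycleRange_apply, swap_apply_def]
  split_ifs <;> simp_all [Fin.ext_iff, Fin.lt_def, Fin.val_add_one] <;> (try split_ifs at *) <;>
    omega

theorem swap_succ_mul_finRotate (i j : Fin n) :
    swap i.succ j.succ * finRotate (n + 1) = finRotate (n + 1) * swap i.castSucc j.castSucc := by
  rw [← coeSucc_eq_succ, ← coeSucc_eq_succ, ← finRotate_apply, ← finRotate_apply,
    swap_apply_apply, inv_mul_cancel_right]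

end Fin

theorem permGraph_adj_iff {n : ℕ} {π σ : Perm (Fin n)} :
    (permGraph n).Adj π σ ↔ ∃ i j : Fin n, (j : ℕ) = i + 1 ∧ σ = π * swap i j := by
  constructor
  · rintro ⟨-, ⟨k, hk, rfl⟩ | ⟨k, hk, rfl⟩⟩
    · exact ⟨_, _, rfl, rfl⟩
    · exact ⟨_, _, rfl, (mul_swap_mul_self _ _ _).symm⟩
  · rintro ⟨⟨i, hi⟩, ⟨j, hj⟩, hij, rfl⟩
    obtain rfl : j = i + 1 := hij
    refine ⟨fun h => ?_, Or.inl ⟨i, hj, rfl⟩⟩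
    rw [left_eq_mul, swap_eq_one_iff, Fin.mk.injEq] at h
    omega

theorem permGraph_adj_mul_swap {n : ℕ} (π : Perm (Fin n)) {i j : Fin n} (hij : (j : ℕ) = i + 1) :
    (permGraph n).Adj π (π * swap i j) :=
  permGraph_adj_iff.mpr ⟨i, j, hij, rfl⟩

section InsertZero

open Perm

variable {n : ℕ}

/-- Reading a permutation `σ` as the word `σ 0, σ 1, …`, this is the word of `π` with every value
raised by one and the new value `0` inserted at position `j`. -/
noncomputable def insertZeroAt (π : Perm (Fin n)) (j : Fin (n + 1)) : Perm (Fin (n + 1)) :=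
  viaEmbeddingHom (Fin.succEmb n) π * j.cycleRange

theorem insertZeroAt_apply_self (π : Perm (Fin n)) (j : Fin (n + 1)) :
    insertZeroAt π j j = 0 := by
  rw [insertZeroAt, Perm.mul_apply, Fin.cycleRange_self, viaEmbeddingHom_apply]
  exact viaEmbedding_apply_of_notMem _ _ _ fun ⟨x, hx⟩ => Fin.succ_ne_zero x hx

theorem insertZeroAt_injective : Function.Injective (Function.uncurry (insertZeroAt (n := n))) := by
  rintro ⟨π, j⟩ ⟨σ, k⟩ h
  obtain rfl : j = k := (insertZeroAt σ k).injective <| by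
    rw [insertZeroAt_apply_self, ← insertZeroAt_apply_self π j]
    exact congrArg (· j) h.symm
  simpa using viaEmbeddingHom_injective _ (mul_right_cancel h)

theorem insertZeroAt_bijective :
    Function.Bijective (Function.uncurry (insertZeroAt (n := n))) :=
  (Fintype.bijective_iff_injective_and_card _).mpr ⟨insertZeroAt_injective, by
    simp [Fintype.card_perm, Nat.factorial_succ, mul_comm]⟩

theorem permGraph_adj_insertZeroAt_succ (π : Perm (Fin n)) (j : Fin n) :
    (permGraph (n + 1)).Adj (insertZeroAt π j.castSucc) (insertZeroAt π j.succ) := by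
  rw [insertZeroAt, insertZeroAt, Fin.cycleRange_succ, ← mul_assoc]
  exact permGraph_adj_mul_swap _ (by simp)

theorem permGraph_adj_insertZeroAt_of_adj {π σ : Perm (Fin n)} (h : (permGraph n).Adj π σ) :
    (permGraph (n + 1)).Adj (insertZeroAt π 0) (insertZeroAt σ 0) ∧
      (permGraph (n + 1)).Adj (insertZeroAt π (Fin.last n)) (insertZeroAt σ (Fin.last n)) := by
  obtain ⟨i, j, hij, rfl⟩ := permGraph_adj_iff.mp h
  have hsucc : ((j.succ : Fin (n + 1)) : ℕ) = i.succ + 1 := by simp [hij]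
  have hcast : ((j.castSucc : Fin (n + 1)) : ℕ) = i.castSucc + 1 := by simp [hij]
  simp only [insertZeroAt]
  rw [map_mul, viaEmbeddingHom_apply (e := swap i j), viaEmbedding_swap,
    Fin.coe_succEmb, Fin.cycleRange_zero, mul_one, mul_one, Fin.cycleRange_last, mul_assoc,
    Fin.swap_succ_mul_finRotate, ← mul_assoc]
  exact ⟨permGraph_adj_mul_swap _ hsucc, permGraph_adj_mul_swap _ hcast⟩

end InsertZero

open SimpleGraph

theorem exists_isHamiltonian_permGraph_adj (n : ℕ) (hn : 2 ≤ n) :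
    ∃ (u v : Perm (Fin n)) (p : (permGraph n).Walk u v),
      p.IsHamiltonian ∧ (permGraph n).Adj v u := by
  induction n, hn using Nat.le_induction with
  | base =>
    have h : (permGraph 2).Adj 1 (swap 0 1) := permGraph_adj_iff.mpr ⟨0, 1, rfl, (one_mul _).symm⟩
    refine ⟨1, swap 0 1, .cons h .nil, ?_, h.symm⟩
    rw [Walk.isHamiltonian_iff_isPath_and_length_eq]
    exact ⟨Walk.IsPath.of_adj h, by simp [Fintype.card_perm]⟩
  | succ n hn ih =>
    obtain ⟨u, v, p, hp, hvu⟩ := ih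
    have hodd : Odd p.length := by
      have heven : Even n.factorial := even_iff_two_dvd.mpr (Nat.dvd_factorial two_pos hn)
      rw [hp.length_eq, Fintype.card_perm, Fintype.card_fin]
      exact Nat.Even.sub_odd (Nat.factorial_pos n) heven odd_one
    obtain ⟨q, hq⟩ := hp.exists_isHamiltonian_zigzag hodd insertZeroAt_bijective
      permGraph_adj_insertZeroAt_succ fun _ _ => permGraph_adj_insertZeroAt_of_adj
    exact ⟨_, _, q, hq, (permGraph_adj_insertZeroAt_of_adj hvu).1⟩

/-- The adjacent-transposition graph on permutations of `{1,…,n}` has a Hamiltonian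
cycle for `n ≥ 3` and a Hamiltonian path for all `n ≥ 2`
(Steinhaus–Johnson–Trotter). -/
theorem permGraph_hamiltonian (n : ℕ) (hn : 2 ≤ n) :
    (3 ≤ n → ∃ (v : Equiv.Perm (Fin n)) (c : (permGraph n).Walk v v),
      c.IsHamiltonianCycle) ∧
    (∃ (u v : Equiv.Perm (Fin n)) (p : (permGraph n).Walk u v),
      p.IsPath ∧ p.IsHamiltonian) := by
  obtain ⟨u, v, p, hp, hvu⟩ := exists_isHamiltonian_permGraph_adj n hn
  refine ⟨fun h3 => ⟨v, .cons hvu p, hp.isHamiltonianCycle_cons hvu ?_⟩, u, v, p, hp.isPath, hp⟩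
  have h6 : 6 ≤ n.factorial := Nat.factorial_le h3
  rw [hp.length_eq, Fintype.card_perm, Fintype.card_fin]
  omega
end

section
/- For every n ≥ 3, there exists a cyclic sequence of n(n−1) triangulations of the path graph model of the cyclohedron, given as follows: there is a cyclic sequence of n(n−1) maximal tubings of the cycle C_n, each nested, with consecutive tubings differing by exchanging exactly one tube, and such that every tube of C_n appears in the tubings of exactly one nonempty contiguous cyclic interval of the sequence. -/
/-- A tube of a graph `G` is a nonempty proper subset of the vertices inducing a
connected subgraph. -/
def IsTube {V : Type*} [Fintype V] [DecidableEq V] (G : SimpleGraph V) (t : Finset V) : Prop :=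
  t.Nonempty ∧ t ≠ Finset.univ ∧ (G.induce (t : Set V)).Connected

/-- Two tubes are compatible if they are nested or non-adjacent. -/
def TubeCompat {V : Type*} [Fintype V] [DecidableEq V] (G : SimpleGraph V)
    (t₁ t₂ : Finset V) : Prop :=
  t₁ ⊆ t₂ ∨ t₂ ⊆ t₁ ∨ ¬ (G.induce ((t₁ ∪ t₂ : Finset V) : Set V)).Connected

/-- A tubing is a set of pairwise compatible tubes. -/
def IsTubing {V : Type*} [Fintype V] [DecidableEq V] (G : SimpleGraph V)
    (T : Finset (Finset V)) : Prop :=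
  (∀ t ∈ T, IsTube G t) ∧ (T : Set (Finset V)).Pairwise (TubeCompat G)

/-- An inclusion-maximal tubing. -/
def IsMaxTubing {V : Type*} [Fintype V] [DecidableEq V] (G : SimpleGraph V)
    (T : Finset (Finset V)) : Prop :=
  IsTubing G T ∧ ∀ T', IsTubing G T' → T ⊆ T' → T' = T

/-!
Nested maximal tubings of `C_n` are the flags of cyclic intervals `I₁ ⊂ ⋯ ⊂ I_{n-1}` with
`|I_k| = k`: any tube compatible with all members of such a flag is one of them, since otherwise
it and the member just below the least member `I_k` containing it would form a non-nested pair
whose union `I_k` is connected. A flag is given by the starting points `s_k` of its intervals,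
subject to `s_{k+1} ∈ {s_k, s_k - 1}`. At time `x` take `s_k = -⌊(x + k) / (n - 1)⌋`: from `x` to
`x + 1` only the interval of size `k` with `n - 1 ∣ x + k + 1` moves (one step to the left), which
is a flip, and the sequence has period `n (n - 1)`. The interval of size `k` starting at `b` is
present exactly while `⌊(x + k) / (n - 1)⌋ ≡ -b (mod n)`, i.e. for `n - 1` consecutive times.
-/

open Finset SimpleGraph
open scoped Fin.CommRing

theorem subset_of_connected_induce_of_adj_closed {V : Type*} {G : SimpleGraph V} {s t : Set V}
    (ht : (G.induce t).Connected) (hst : s ⊆ t) (hs : s.Nonempty)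
    (hclosed : ∀ x ∈ s, ∀ y ∈ t, G.Adj x y → y ∈ s) : t ⊆ s := by
  intro v hv
  by_contra hvs
  obtain ⟨u, hu⟩ := hs
  obtain ⟨p⟩ := ht.preconnected ⟨u, hst hu⟩ ⟨v, hv⟩
  obtain ⟨d, -, hd₁, hd₂⟩ := p.exists_boundary_dart {x | x.1 ∈ s} hu hvs
  exact hd₂ (hclosed _ hd₁ _ d.snd.2 d.adj)

theorem Nat.existsUnique_mem_Icc_dvd_add {m : ℕ} (hm : 0 < m) (y : ℕ) :
    ∃! k, k ∈ Icc 1 m ∧ m ∣ y + k := by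
  have hy := Nat.mod_lt y hm
  have hdvd₀ : m ∣ y + (m - y % m) := ⟨y / m + 1, by
    have := Nat.div_add_mod y m
    rw [mul_add, mul_one]
    omega⟩
  refine ⟨m - y % m, ⟨mem_Icc.2 ⟨by omega, by omega⟩, hdvd₀⟩, ?_⟩
  rintro k ⟨hk, hdvd⟩
  rw [mem_Icc] at hk
  rcases le_total k (m - y % m) with h | h
  · have := Nat.eq_zero_of_dvd_of_lt (Nat.dvd_sub hdvd₀ hdvd) (by omega)
    omega
  · have := Nat.eq_zero_of_dvd_of_lt (Nat.dvd_sub hdvd hdvd₀) (by omega)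
    omega

theorem Nat.mod_mul_lt_iff_dvd_div {m : ℕ} (hm : 0 < m) (n x : ℕ) :
    x % (n * m) < m ↔ n ∣ x / m := by
  rw [mul_comm, Nat.mod_mul, Nat.dvd_iff_mod_eq_zero]
  rcases Nat.eq_zero_or_pos (x / m % n) with h | h
  · simp [h, Nat.mod_lt x hm]
  · have := Nat.le_mul_of_pos_right m h
    omega

theorem ZMod.exists_lt_eq_add_iff_val_sub_lt {N m : ℕ} [NeZero N] (hm : m ≤ N) (a j : ZMod N) :
    (∃ i < m, j = a + i) ↔ (j - a).val < m := by
  constructor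
  · rintro ⟨i, hi, rfl⟩
    rw [add_sub_cancel_left, ZMod.val_natCast, Nat.mod_eq_of_lt (by omega)]
    exact hi
  · intro h
    exact ⟨(j - a).val, h, by rw [ZMod.natCast_zmod_val]; ring⟩

section CyclicInterval

variable {n : ℕ} [NeZero n]

theorem cycleGraph_adj_iff_eq_add_one (hn : 2 ≤ n) {u v : Fin n} :
    (cycleGraph n).Adj u v ↔ v = u + 1 ∨ u = v + 1 := by
  obtain ⟨n, rfl⟩ : ∃ m, n = m + 2 := ⟨n - 2, by omega⟩
  rw [cycleGraph_adj, sub_eq_iff_eq_add, sub_eq_iff_eq_add, add_comm 1 v, add_comm 1 u, or_comm]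

def cyclicInterval (a : Fin n) (k : ℕ) : Finset (Fin n) :=
  (range k).image fun i : ℕ => a + i

theorem mem_cyclicInterval {a v : Fin n} {k : ℕ} :
    v ∈ cyclicInterval a k ↔ ∃ i < k, v = a + i := by
  simp [cyclicInterval, eq_comm]

theorem cyclicInterval_succ (a : Fin n) (k : ℕ) :
    cyclicInterval a (k + 1) = insert (a + k) (cyclicInterval a k) := by
  rw [cyclicInterval, range_add_one, image_insert, cyclicInterval]

theorem cyclicInterval_sub_one_succ (a : Fin n) (k : ℕ) :
    cyclicInterval (a - 1) (k + 1) = insert (a - 1) (cyclicInterval a k) := by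
  ext v
  simp only [mem_insert, mem_cyclicInterval]
  constructor
  · rintro ⟨_ | i, hi, rfl⟩
    · simp
    · exact Or.inr ⟨i, by omega, by push_cast; ring⟩
  · rintro (rfl | ⟨i, hi, rfl⟩)
    · exact ⟨0, by omega, by simp⟩
    · exact ⟨i + 1, by omega, by push_cast; ring⟩

theorem card_cyclicInterval (a : Fin n) {k : ℕ} (hk : k ≤ n) : #(cyclicInterval a k) = k := by
  rw [cyclicInterval, card_image_of_injOn, card_range]
  intro i hi j hj hij
  have hval := congrArg Fin.val (add_left_cancel hij)
  simp only [coe_range, Set.mem_Iio] at hi hj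
  rwa [Fin.val_natCast, Fin.val_natCast, Nat.mod_eq_of_lt (by omega),
    Nat.mod_eq_of_lt (by omega)] at hval

theorem sub_one_notMem_cyclicInterval (a : Fin n) {k : ℕ} (hk : k < n) :
    a - 1 ∉ cyclicInterval a k := by
  rw [mem_cyclicInterval]
  rintro ⟨i, hi, hai⟩
  have : ((i + 1 : ℕ) : Fin n) = 0 := by push_cast; linear_combination -hai
  have := Nat.le_of_dvd (Nat.succ_pos i) (Fin.natCast_eq_zero.1 this)
  omega

theorem cyclicInterval_left_injective {k : ℕ} (hk₁ : 1 ≤ k) (hk : k < n) :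
    Function.Injective (cyclicInterval (n := n) · k) := by
  intro a b (hab : cyclicInterval a k = cyclicInterval b k)
  have ha : a ∈ cyclicInterval b k := hab ▸ mem_cyclicInterval.2 ⟨0, hk₁, by simp⟩
  obtain ⟨i, hi, rfl⟩ := mem_cyclicInterval.1 ha
  rcases i with _ | i
  · simp
  · refine absurd ?_ (sub_one_notMem_cyclicInterval (b + ((i + 1 : ℕ) : Fin n)) hk)
    rw [hab, mem_cyclicInterval]
    exact ⟨i, by omega, by push_cast; ring⟩

theorem connected_induce_cyclicInterval (hn : 2 ≤ n) (a : Fin n) {k : ℕ} (hk : 1 ≤ k) :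
    ((cycleGraph n).induce (cyclicInterval a k : Set (Fin n))).Connected := by
  obtain ⟨k, rfl⟩ : ∃ j, k = j + 1 := ⟨k - 1, by omega⟩
  clear hk
  induction k with
  | zero =>
    rw [zero_add, cyclicInterval_succ, Nat.cast_zero, add_zero, cyclicInterval, range_zero,
      image_empty, insert_empty, coe_singleton, induce_singleton_eq_top]
    exact connected_top
  | succ k ih =>
    have hsingle : ((cycleGraph n).induce {a + ((k + 1 : ℕ) : Fin n)}).Preconnected := by
      rw [induce_singleton_eq_top]
      exact connected_top.preconnected
    rw [cyclicInterval_succ, coe_insert, Set.insert_eq, Set.union_comm]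
    refine connected_induce_union (v := a + (k : ℕ)) ih.preconnected hsingle
      (mem_cyclicInterval.2 ⟨k, by omega, rfl⟩) rfl ?_
    rw [cycleGraph_adj_iff_eq_add_one hn]
    left
    push_cast
    ring

theorem exists_mem_sub_one_notMem {t : Finset (Fin n)} (htne : t.Nonempty) (htu : t ≠ univ) :
    ∃ u ∈ t, u - 1 ∉ t := by
  obtain ⟨v, hv⟩ := htne
  by_contra! h
  have hall : ∀ i : ℕ, v - i ∈ t := by
    intro i
    induction i with
    | zero => simpa using hv
    | succ i ih => simpa [sub_add_eq_sub_sub] using h _ ih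
  exact htu (eq_univ_of_forall fun c => by simpa using hall (v - c).val)

theorem exists_eq_cyclicInterval_of_isTube (hn : 2 ≤ n) {t : Finset (Fin n)}
    (ht : IsTube (cycleGraph n) t) : ∃ a k, 1 ≤ k ∧ k < n ∧ t = cyclicInterval a k := by
  obtain ⟨htne, htu, hconn⟩ := ht
  obtain ⟨c, hc⟩ : ∃ c, c ∉ t := by simpa [eq_univ_iff_forall] using htu
  obtain ⟨u, hu, hu₁⟩ := exists_mem_sub_one_notMem htne htu
  have hc' : u + ((c - u).val : ℕ) ∉ t := by simpa using hc
  have hex : ∃ k : ℕ, u + k ∉ t := ⟨_, hc'⟩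
  set k := Nat.find hex
  have hk_out : u + k ∉ t := Nat.find_spec hex
  have hk_in : ∀ i < k, u + i ∈ t := fun i hi => not_not.1 (Nat.find_min hex hi)
  have hk₁ : 1 ≤ k := Nat.one_le_iff_ne_zero.2 fun h => hk_out (by simpa [h] using hu)
  have hkn : k < n := (Nat.find_min' hex hc').trans_lt (Fin.is_lt _)
  have hsub : cyclicInterval u k ⊆ t := by
    intro w hw
    obtain ⟨i, hi, rfl⟩ := mem_cyclicInterval.1 hw
    exact hk_in i hi
  refine ⟨u, k, hk₁, hkn, Subset.antisymm ?_ hsub⟩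
  have := subset_of_connected_induce_of_adj_closed hconn (by exact_mod_cast hsub)
    ⟨u, mem_cyclicInterval.2 ⟨0, hk₁, by simp⟩⟩ ?_
  · exact_mod_cast this
  intro x hx y hy hxy
  obtain ⟨i, hi, rfl⟩ := mem_cyclicInterval.1 hx
  rw [mem_coe] at hy ⊢
  rw [cycleGraph_adj_iff_eq_add_one hn] at hxy
  rcases hxy with rfl | hxy
  · rcases Nat.lt_or_ge (i + 1) k with h | h
    · exact mem_cyclicInterval.2 ⟨i + 1, h, by push_cast; ring⟩
    · rw [add_assoc, ← Nat.cast_add_one, show i + 1 = k by omega] at hy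
      exact absurd hy hk_out
  · rcases i with _ | i
    · rw [Nat.cast_zero, add_zero] at hxy
      subst hxy
      simp only [add_sub_cancel_right] at hu₁
      exact absurd hy hu₁
    · exact mem_cyclicInterval.2 ⟨i, by omega, by push_cast at hxy; linear_combination -hxy⟩

theorem isTube_cycleGraph_iff (hn : 2 ≤ n) {t : Finset (Fin n)} :
    IsTube (cycleGraph n) t ↔ ∃ a k, 1 ≤ k ∧ k < n ∧ t = cyclicInterval a k := by
  refine ⟨exists_eq_cyclicInterval_of_isTube hn, ?_⟩
  rintro ⟨a, k, hk₁, hkn, rfl⟩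
  refine ⟨⟨a, mem_cyclicInterval.2 ⟨0, hk₁, by simp⟩⟩, fun h => ?_,
    connected_induce_cyclicInterval hn a hk₁⟩
  have := congrArg card h
  rw [card_cyclicInterval a hkn.le, card_univ, Fintype.card_fin] at this
  omega

end CyclicInterval

section Flag

variable {V : Type*} [Fintype V] [DecidableEq V] {G : SimpleGraph V} {C : ℕ → Finset V}

theorem isTubing_image_flag (hmono : Monotone C) (hcard : ∀ k ≤ Fintype.card V, #(C k) = k)
    (hconn : ∀ k ∈ Icc 1 (Fintype.card V), (G.induce (C k : Set V)).Connected) :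
    IsTubing G ((Icc 1 (Fintype.card V - 1)).image C) := by
  refine ⟨?_, ?_⟩
  · simp only [mem_image, mem_Icc]
    rintro _ ⟨k, hk, rfl⟩
    refine ⟨card_pos.1 (by rw [hcard k (by omega)]; omega), fun h => ?_,
      hconn k (mem_Icc.2 ⟨hk.1, by omega⟩)⟩
    have := hcard k (by omega)
    rw [h, card_univ] at this
    omega
  · intro s hs s' hs' _
    obtain ⟨k, -, rfl⟩ := mem_image.1 (mem_coe.1 hs)
    obtain ⟨l, -, rfl⟩ := mem_image.1 (mem_coe.1 hs')
    rcases le_total k l with h | h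
    · exact Or.inl (hmono h)
    · exact Or.inr (Or.inl (hmono h))

theorem mem_image_flag_of_tubeCompat (hmono : Monotone C)
    (hcard : ∀ k ≤ Fintype.card V, #(C k) = k)
    (hconn : ∀ k ∈ Icc 1 (Fintype.card V), (G.induce (C k : Set V)).Connected)
    {t : Finset V} (ht : IsTube G t)
    (hcompat : ∀ k ∈ Icc 1 (Fintype.card V - 1), t ≠ C k → TubeCompat G t (C k)) :
    t ∈ (Icc 1 (Fintype.card V - 1)).image C := by
  obtain ⟨htne, htu, -⟩ := ht
  have htcard : #t < Fintype.card V := (card_lt_iff_ne_univ t).2 htu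
  have htC : t ⊆ C (Fintype.card V) := by
    rw [eq_univ_of_card _ (hcard _ le_rfl)]
    exact subset_univ t
  have hex : ∃ k, t ⊆ C k := ⟨_, htC⟩
  set k := Nat.find hex
  have htk : t ⊆ C k := Nat.find_spec hex
  have hkV : k ≤ Fintype.card V := Nat.find_min' hex htC
  by_cases hteq : t = C k
  · have : #t = k := hteq ▸ hcard k hkV
    exact mem_image.2 ⟨k, mem_Icc.2 ⟨by rw [← this]; exact card_pos.2 htne, by omega⟩, hteq.symm⟩
  exfalso
  have htlt : #t < k := by
    have := card_lt_card (ssubset_of_subset_of_ne htk hteq)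
    rwa [hcard k hkV] at this
  have hnot_sub : ¬ t ⊆ C (k - 1) := Nat.find_min hex (by omega)
  have hnot_sup : ¬ C (k - 1) ⊆ t := fun h => hnot_sub
    (eq_of_subset_of_card_le h (by rw [hcard _ (by omega)]; omega) ▸ subset_rfl)
  have hk₂ : 2 ≤ k := by
    by_contra hk
    have hempty : C (k - 1) = ∅ := card_eq_zero.1 (by rw [hcard _ (by omega)]; omega)
    exact hnot_sup (hempty ▸ empty_subset t)
  have hunion : t ∪ C (k - 1) = C k := by
    refine eq_of_subset_of_card_le (union_subset htk (hmono (by omega))) ?_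
    have hss : C (k - 1) ⊂ t ∪ C (k - 1) :=
      ssubset_of_subset_of_ne subset_union_right fun h => hnot_sub (h ▸ subset_union_left)
    have := card_lt_card hss
    rw [hcard _ (by omega)] at this
    rw [hcard k hkV]
    omega
  rcases hcompat (k - 1) (mem_Icc.2 ⟨by omega, by omega⟩) fun h => hnot_sub (h ▸ subset_rfl)
    with h | h | h
  · exact hnot_sub h
  · exact hnot_sup h
  · exact h (hunion ▸ hconn k (mem_Icc.2 ⟨by omega, hkV⟩))

theorem isMaxTubing_image_flag (hmono : Monotone C) (hcard : ∀ k ≤ Fintype.card V, #(C k) = k)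
    (hconn : ∀ k ∈ Icc 1 (Fintype.card V), (G.induce (C k : Set V)).Connected) :
    IsMaxTubing G ((Icc 1 (Fintype.card V - 1)).image C) := by
  refine ⟨isTubing_image_flag hmono hcard hconn, fun T hT hsub => Subset.antisymm ?_ hsub⟩
  intro t ht
  refine mem_image_flag_of_tubeCompat hmono hcard hconn (hT.1 t ht) fun k hk hne => ?_
  exact hT.2 ht (hsub (mem_image_of_mem C hk)) hne

end Flag

theorem image_sdiff_image_eq_singleton {α : Type*} [DecidableEq α] {S : Finset ℕ}
    {f g : ℕ → Finset α} (hf : ∀ k ∈ S, #(f k) = k) (hg : ∀ k ∈ S, #(g k) = k) {k₀ : ℕ}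
    (hk₀ : k₀ ∈ S) (hne : f k₀ ≠ g k₀) (heq : ∀ k ∈ S, k ≠ k₀ → f k = g k) :
    S.image f \ S.image g = {f k₀} := by
  ext t
  simp only [mem_sdiff, mem_image, mem_singleton]
  constructor
  · rintro ⟨⟨k, hk, rfl⟩, hg'⟩
    by_contra h
    exact hg' ⟨k, hk, (heq k hk fun hk' => h (hk' ▸ rfl)).symm⟩
  · rintro rfl
    refine ⟨⟨k₀, hk₀, rfl⟩, ?_⟩
    rintro ⟨k, hk, hgk⟩
    have : k = k₀ := by rw [← hg k hk, hgk, hf k₀ hk₀]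
    exact hne (this ▸ hgk).symm

section Construction

variable {n : ℕ} [NeZero n]

def cycleFlagStart (n : ℕ) [NeZero n] (x k : ℕ) : Fin n :=
  -(((x + k) / (n - 1) : ℕ) : Fin n)

def cycleFlag (n : ℕ) [NeZero n] (x k : ℕ) : Finset (Fin n) :=
  cyclicInterval (cycleFlagStart n x k) k

def cycleFlagTubing (n : ℕ) [NeZero n] (x : ℕ) : Finset (Finset (Fin n)) :=
  (Icc 1 (n - 1)).image (cycleFlag n x)

theorem cycleFlagStart_succ (x k : ℕ) :
    cycleFlagStart n x (k + 1) = cycleFlagStart n x k - if n - 1 ∣ x + k + 1 then 1 else 0 := by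
  rw [cycleFlagStart, cycleFlagStart, ← add_assoc, Nat.succ_div]
  split_ifs <;> push_cast <;> ring

theorem cycleFlagStart_succ_left (x k : ℕ) :
    cycleFlagStart n (x + 1) k = cycleFlagStart n x (k + 1) := by
  rw [cycleFlagStart, cycleFlagStart, add_right_comm, add_assoc]

theorem cycleFlagStart_add_mul (hn : 2 ≤ n) (x k q : ℕ) :
    cycleFlagStart n (x + n * (n - 1) * q) k = cycleFlagStart n x k := by
  rw [cycleFlagStart, cycleFlagStart, show x + n * (n - 1) * q + k = x + k + n * q * (n - 1) by ring,
    Nat.add_mul_div_right _ _ (by omega)]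
  push_cast [Fin.natCast_self]
  ring

theorem cycleFlagStart_eq_iff (hn : 2 ≤ n) {x k : ℕ} {b : Fin n} :
    cycleFlagStart n x k = b ↔ (x + k + b.val * (n - 1)) % (n * (n - 1)) < n - 1 := by
  rw [Nat.mod_mul_lt_iff_dvd_div (by omega), Nat.add_mul_div_right _ _ (by omega),
    ← Fin.natCast_eq_zero, cycleFlagStart, neg_eq_iff_add_eq_zero, Nat.cast_add,
    Fin.cast_val_eq_self]

theorem cycleFlag_mono (x : ℕ) : Monotone (cycleFlag n x) := by
  refine monotone_nat_of_le_succ fun k => ?_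
  rw [cycleFlag, cycleFlag, cycleFlagStart_succ]
  split_ifs
  · rw [cyclicInterval_sub_one_succ]
    exact subset_insert _ _
  · rw [sub_zero, cyclicInterval_succ]
    exact subset_insert _ _

theorem card_cycleFlag (x : ℕ) {k : ℕ} (hk : k ≤ n) : #(cycleFlag n x k) = k :=
  card_cyclicInterval _ hk

theorem cycleFlag_succ_left_eq_iff (hn : 2 ≤ n) {x k : ℕ} (hk : k ∈ Icc 1 (n - 1)) :
    cycleFlag n (x + 1) k = cycleFlag n x k ↔ ¬ n - 1 ∣ x + k + 1 := by
  rw [mem_Icc] at hk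
  rw [cycleFlag, cycleFlag, cycleFlagStart_succ_left, cycleFlagStart_succ,
    (cyclicInterval_left_injective hk.1 (by omega)).eq_iff]
  split_ifs with h
  · simpa [h, sub_eq_self, Fin.one_eq_zero_iff] using by omega
  · simpa using h

theorem connected_induce_cycleFlag (hn : 2 ≤ n) (x : ℕ) {k : ℕ} (hk : 1 ≤ k) :
    ((cycleGraph n).induce (cycleFlag n x k : Set (Fin n))).Connected :=
  connected_induce_cyclicInterval hn _ hk

theorem isMaxTubing_cycleFlagTubing (hn : 2 ≤ n) (x : ℕ) :
    IsMaxTubing (cycleGraph n) (cycleFlagTubing n x) := by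
  have h := isMaxTubing_image_flag (G := cycleGraph n) (cycleFlag_mono x)
    (by simpa using fun k => card_cycleFlag x (k := k))
    (by simpa using fun k hk _ => connected_induce_cycleFlag hn x hk)
  rwa [Fintype.card_fin] at h

theorem subset_total_of_mem_cycleFlagTubing {x : ℕ} {t₁ t₂ : Finset (Fin n)}
    (h₁ : t₁ ∈ cycleFlagTubing n x) (h₂ : t₂ ∈ cycleFlagTubing n x) : t₁ ⊆ t₂ ∨ t₂ ⊆ t₁ := by
  obtain ⟨k, -, rfl⟩ := mem_image.1 h₁
  obtain ⟨l, -, rfl⟩ := mem_image.1 h₂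
  exact (le_total k l).imp (fun h => cycleFlag_mono x h) (fun h => cycleFlag_mono x h)

theorem cycleFlagTubing_sdiff_succ (hn : 2 ≤ n) (x : ℕ) : ∃ k ∈ Icc 1 (n - 1),
    cycleFlagTubing n x \ cycleFlagTubing n (x + 1) = {cycleFlag n x k} ∧
    cycleFlagTubing n (x + 1) \ cycleFlagTubing n x = {cycleFlag n (x + 1) k} := by
  obtain ⟨k, ⟨hk, hdvd⟩, huniq⟩ := Nat.existsUnique_mem_Icc_dvd_add (m := n - 1) (by omega) (x + 1)
  have hcard : ∀ y, ∀ l ∈ Icc 1 (n - 1), #(cycleFlag n y l) = l :=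
    fun y l hl => card_cycleFlag y (by rw [mem_Icc] at hl; omega)
  have hmoves : cycleFlag n (x + 1) k ≠ cycleFlag n x k := by
    rw [Ne, cycleFlag_succ_left_eq_iff hn hk, not_not, add_right_comm]
    exact hdvd
  have hstays : ∀ l ∈ Icc 1 (n - 1), l ≠ k → cycleFlag n (x + 1) l = cycleFlag n x l :=
    fun l hl hlk => (cycleFlag_succ_left_eq_iff hn hl).2 fun h =>
      hlk (huniq l ⟨hl, by rwa [add_right_comm]⟩)
  exact ⟨k, hk,
    image_sdiff_image_eq_singleton (hcard x) (hcard (x + 1)) hk (Ne.symm hmoves)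
      fun l hl hlk => (hstays l hl hlk).symm,
    image_sdiff_image_eq_singleton (hcard (x + 1)) (hcard x) hk hmoves hstays⟩

theorem cycleFlagTubing_mod (hn : 2 ≤ n) (x : ℕ) :
    cycleFlagTubing n (x % (n * (n - 1))) = cycleFlagTubing n x := by
  conv_rhs => rw [← Nat.mod_add_div x (n * (n - 1))]
  rw [cycleFlagTubing, cycleFlagTubing]
  congr 1
  funext k
  rw [cycleFlag, cycleFlag, cycleFlagStart_add_mul hn]

theorem cyclicInterval_mem_cycleFlagTubing_iff (hn : 2 ≤ n) {x k : ℕ} (hk : k ∈ Icc 1 (n - 1))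
    {b : Fin n} : cyclicInterval b k ∈ cycleFlagTubing n x ↔ cycleFlagStart n x k = b := by
  refine ⟨fun h => ?_, fun h => mem_image.2 ⟨k, hk, h ▸ rfl⟩⟩
  rw [mem_Icc] at hk
  obtain ⟨l, hl, hlk⟩ := mem_image.1 h
  have : l = k := by
    rw [← card_cycleFlag (n := n) x (show l ≤ n by rw [mem_Icc] at hl; omega), hlk,
      card_cyclicInterval b (by omega)]
  subst this
  exact cyclicInterval_left_injective hk.1 (by omega) hlk

theorem cyclicInterval_mem_cycleFlagTubing_val_iff (hn : 2 ≤ n) {k : ℕ} (hk : k ∈ Icc 1 (n - 1))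
    (b : Fin n) (j : ZMod (n * (n - 1))) :
    cyclicInterval b k ∈ cycleFlagTubing n j.val ↔
      ∃ i < n - 1, j = -((k + b.val * (n - 1) : ℕ) : ZMod (n * (n - 1))) + i := by
  have : NeZero (n * (n - 1)) := ⟨Nat.mul_ne_zero (by omega) (by omega)⟩
  have hsub : j - -((k + b.val * (n - 1) : ℕ) : ZMod (n * (n - 1))) =
      ((j.val + k + b.val * (n - 1) : ℕ) : ZMod (n * (n - 1))) := by
    push_cast [ZMod.natCast_zmod_val]
    ring
  rw [ZMod.exists_lt_eq_add_iff_val_sub_lt (Nat.le_mul_of_pos_left _ (by omega)), hsub,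
    ZMod.val_natCast, cyclicInterval_mem_cycleFlagTubing_iff hn hk, cycleFlagStart_eq_iff hn]

end Construction

/-- The cyclohedron has a facet-Hamiltonian cycle through nested tubings: for `n ≥ 3`
there is a cyclic sequence of `n(n-1)` nested maximal tubings of the cycle `C_n`,
consecutive ones differing by exchanging exactly one tube, such that every tube of `C_n`
appears in the tubings of exactly one nonempty contiguous cyclic interval. -/
theorem cyclohedron_facet_hamiltonian_cycle (n : ℕ) (hn : 3 ≤ n) :
    ∃ T : ZMod (n * (n - 1)) → Finset (Finset (Fin n)),
      (∀ j, IsMaxTubing (SimpleGraph.cycleGraph n) (T j)) ∧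
      (∀ j, ∀ t₁ ∈ T j, ∀ t₂ ∈ T j, t₁ ⊆ t₂ ∨ t₂ ⊆ t₁) ∧
      (∀ j, ((T j) \ (T (j + 1))).card = 1 ∧ ((T (j + 1)) \ (T j)).card = 1) ∧
      (∀ t : Finset (Fin n), IsTube (SimpleGraph.cycleGraph n) t →
        ∃ (a : ZMod (n * (n - 1))) (len : ℕ), 1 ≤ len ∧ len ≤ n * (n - 1) ∧
          ∀ j, t ∈ T j ↔ ∃ i : ℕ, i < len ∧ j = a + (i : ZMod (n * (n - 1)))) := by
  have : NeZero n := ⟨by omega⟩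
  have : NeZero (n * (n - 1)) := ⟨Nat.mul_ne_zero (by omega) (by omega)⟩
  have hn₂ : 2 ≤ n := by omega
  refine ⟨fun j => cycleFlagTubing n j.val, fun j => isMaxTubing_cycleFlagTubing hn₂ _,
    fun j _ h₁ _ h₂ => subset_total_of_mem_cycleFlagTubing h₁ h₂, fun j => ?_, fun t ht => ?_⟩
  · have hval : (j + 1).val = (j.val + 1) % (n * (n - 1)) := by
      rw [← ZMod.val_natCast, Nat.cast_add, ZMod.natCast_zmod_val, Nat.cast_one]
    obtain ⟨k, -, h₁, h₂⟩ := cycleFlagTubing_sdiff_succ hn₂ j.val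
    simp only [hval, cycleFlagTubing_mod hn₂, h₁, h₂, card_singleton, and_self]
  · obtain ⟨b, k, hk₁, hkn, rfl⟩ := (isTube_cycleGraph_iff hn₂).1 ht
    exact ⟨_, n - 1, by omega, Nat.le_mul_of_pos_left _ (by omega),
      cyclicInterval_mem_cycleFlagTubing_val_iff hn₂ (mem_Icc.2 ⟨hk₁, by omega⟩) b⟩
end
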